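/- arXiv:1109.0450 — 3 statements merged into one kernel-verified Lean document; each statement's English description precedes it below -/
import Mathlib

section
/- Let A be a positive definite bounded operator and B a positive semidefinite bounded operator on a complex Hilbert space H. Let m, k be positive integers, t ∈ [0,1], and r ∈ ℝ. Then the map x ↦ A^{r/2} ( A^{-t/2} (A + xB)^m A^{-t/2} )^{k} A^{r/2} (with m and k integer powers) is differentiable at x = 0 in operator norm, and its derivative at 0 equals A^{r/2} · { Σ_{i=1}^{k} A^{(m-t)(k-i)} · [ A^{-t/2} ( Σ_{j=1}^{m} A^{m-j} B A^{j-1} ) A^{-t/2} ] · A^{(m-t)(i-1)} } · A^{r/2}. -/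
/-!
Differentiate `x ↦ A + x • B` at `0` and push the derivative through the noncommutative product
rule for powers twice. At `x = 0` the middle factor `A^{-t/2} A^m A^{-t/2}` collapses to
`A^{m-t}`, whose natural powers are the real powers `A^{(m-t)n}` since `A` is invertible.
-/

open Finset

theorem HasDerivAt.fun_pow_Icc {𝕜 𝔸 : Type*} [NontriviallyNormedField 𝕜] [NormedRing 𝔸]
    [NormedAlgebra 𝕜 𝔸] {f : 𝕜 → 𝔸} {f' : 𝔸} {x : 𝕜} (h : HasDerivAt f f' x) (n : ℕ) :
    HasDerivAt (fun y ↦ f y ^ n) (∑ j ∈ Icc 1 n, f x ^ (n - j) * f' * f x ^ (j - 1)) x := by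
  convert h.fun_pow' n using 1
  rw [← Ico_add_one_right_eq_Icc, sum_Ico_eq_sum_range]
  refine sum_congr rfl fun i _ => ?_
  rw [Nat.pred_eq_sub_one]
  congr 3 <;> omega

namespace CFC

variable {A : Type*} [PartialOrder A] [Ring A] [StarRing A] [TopologicalSpace A]
  [StarOrderedRing A] [Algebra ℝ A] [ContinuousFunctionalCalculus ℝ A IsSelfAdjoint]
  [NonnegSpectrumClass ℝ A] {a : A}

lemma rpow_pow_eq_rpow_mul (ha₀ : 0 ≤ a) (ha : IsUnit a) (x : ℝ) (n : ℕ) :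
    (a ^ x) ^ n = a ^ (x * n) := by
  induction n with
  | zero => simp [rpow_zero a ha₀]
  | succ n ih => rw [pow_succ, ih, ← rpow_add ha]; push_cast; ring_nf

lemma rpow_mul_pow_mul_rpow (ha₀ : 0 ≤ a) (ha : IsUnit a) (x : ℝ) (n : ℕ) :
    a ^ x * a ^ n * a ^ x = a ^ (n + 2 * x) := by
  rw [← rpow_natCast a n ha₀, ← rpow_add ha, ← rpow_add ha]
  ring_nf

end CFC

theorem stmt_5_general {H : Type*} [NormedAddCommGroup H] [InnerProductSpace ℂ H] [CompleteSpace H]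
    (A B : H →L[ℂ] H) (hA : 0 ≤ A) (hAinv : IsUnit A)
    (m k : ℕ)
    (t : ℝ) (r : ℝ) :
    HasDerivAt
      (fun x : ℝ =>
        A ^ (r / 2) * (A ^ (-(t / 2)) * (A + x • B) ^ m * A ^ (-(t / 2))) ^ k * A ^ (r / 2))
      (A ^ (r / 2) *
        (∑ i ∈ Finset.Icc 1 k,
          A ^ (((m : ℝ) - t) * ((k : ℝ) - i)) *
            (A ^ (-(t / 2)) * (∑ j ∈ Finset.Icc 1 m, A ^ (m - j) * B * A ^ (j - 1)) *
              A ^ (-(t / 2))) *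
            A ^ (((m : ℝ) - t) * ((i : ℝ) - 1))) *
        A ^ (r / 2)) 0 := by
  have hline : HasDerivAt (fun x : ℝ => A + x • B) B 0 := by
    simpa using ((hasDerivAt_id (0 : ℝ)).smul_const B).const_add A
  have hinner := ((hline.fun_pow_Icc m).const_mul (A ^ (-(t / 2)))).mul_const (A ^ (-(t / 2)))
  have h := ((hinner.fun_pow_Icc k).const_mul (A ^ (r / 2))).mul_const (A ^ (r / 2))
  have hmiddle : A ^ (-(t / 2)) * A ^ m * A ^ (-(t / 2)) = A ^ ((m : ℝ) - t) := by
    rw [CFC.rpow_mul_pow_mul_rpow hA hAinv]; ring_nf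
  simp only [zero_smul, add_zero, hmiddle, CFC.rpow_pow_eq_rpow_mul hA hAinv] at h
  refine h.congr_deriv ?_
  congr 2
  refine sum_congr rfl fun i hi => ?_
  obtain ⟨hi₁, hik⟩ := mem_Icc.mp hi
  rw [Nat.cast_sub hik, Nat.cast_sub hi₁, Nat.cast_one]

/-- The map `x ↦ A^{r/2} (A^{-t/2} (A+xB)^m A^{-t/2})^k A^{r/2}` is differentiable
(in operator norm) at `x = 0`, with derivative
`A^{r/2} { ∑_{i=1}^{k} A^{(m-t)(k-i)} [A^{-t/2} (∑_{j=1}^{m} A^{m-j} B A^{j-1}) A^{-t/2}]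
  A^{(m-t)(i-1)} } A^{r/2}`. -/
theorem stmt_5 {H : Type*} [NormedAddCommGroup H] [InnerProductSpace ℂ H] [CompleteSpace H]
    (A B : H →L[ℂ] H) (hA : 0 ≤ A) (hAinv : IsUnit A) (hB : 0 ≤ B)
    (m k : ℕ) (hm : 0 < m) (hk : 0 < k)
    (t : ℝ) (ht : t ∈ Set.Icc (0 : ℝ) 1) (r : ℝ) :
    HasDerivAt
      (fun x : ℝ =>
        A ^ (r / 2) * (A ^ (-(t / 2)) * (A + x • B) ^ m * A ^ (-(t / 2))) ^ k * A ^ (r / 2))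
      (A ^ (r / 2) *
        (∑ i ∈ Finset.Icc 1 k,
          A ^ (((m : ℝ) - t) * ((k : ℝ) - i)) *
            (A ^ (-(t / 2)) * (∑ j ∈ Finset.Icc 1 m, A ^ (m - j) * B * A ^ (j - 1)) *
              A ^ (-(t / 2))) *
            A ^ (((m : ℝ) - t) * ((i : ℝ) - 1))) *
        A ^ (r / 2)) 0 :=
  stmt_5_general A B hA hAinv m k t r
end

section
/- Let A be an l×l Hermitian positive definite complex matrix and let n be a positive integer. Then for every l×l complex matrix Y there exists a unique l×l complex matrix X satisfying Σ_{j=1}^{n} A^{n-j} X A^{j-1} = Y. -/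
/-!
The map `X ↦ ∑ A ^ (n - j) * X * A ^ (j - 1)` is a linear endomorphism of a finite-dimensional
space, so it suffices to show that it is injective. Writing the positive definite powers of `A`
as `Rᴴ * R` with `R` invertible, the trace pairing with `X` turns each summand into
`trace ((R X Sᴴ)ᴴ (R X Sᴴ)) > 0` when `X ≠ 0`, so the sum cannot vanish.
-/

open scoped ComplexOrder

/-- `(a + h) ^ k = a ^ k + derivPow R a k h + O(h²)`: the derivative of `x ↦ x ^ k` at `a`. -/
def derivPow (R : Type*) {A : Type*} [CommSemiring R] [Semiring A] [Algebra R A] (a : A)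
    (k : ℕ) : A →ₗ[R] A :=
  ∑ j ∈ Finset.Icc 1 k, LinearMap.mulLeft R (a ^ (k - j)) ∘ₗ LinearMap.mulRight R (a ^ (j - 1))

theorem derivPow_apply (R : Type*) {A : Type*} [CommSemiring R] [Semiring A] [Algebra R A]
    (a : A) (k : ℕ) (x : A) :
    derivPow R a k x = ∑ j ∈ Finset.Icc 1 k, a ^ (k - j) * x * a ^ (j - 1) := by
  simp only [derivPow, LinearMap.sum_apply, LinearMap.comp_apply,
    LinearMap.mulLeft_apply, LinearMap.mulRight_apply, mul_assoc]

namespace Matrix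

variable {m n 𝕜 : Type*} [Fintype m] [Fintype n] [RCLike 𝕜]

theorem trace_conjTranspose_mul_self_pos {M : Matrix m n 𝕜} (hM : M ≠ 0) :
    0 < (Mᴴ * M).trace :=
  (posSemidef_conjTranspose_mul_self M).trace_nonneg.lt_of_ne'
    (trace_conjTranspose_mul_self_eq_zero_iff.not.mpr hM)

variable [DecidableEq n]

protected theorem PosDef.pow {A : Matrix n n 𝕜} (hA : A.PosDef) (k : ℕ) : (A ^ k).PosDef :=
  (hA.posSemidef.pow k).posDef_iff_isUnit.mpr (hA.isUnit.pow k)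

open scoped MatrixOrder in
theorem PosDef.exists_isUnit_eq_conjTranspose_mul_self {P : Matrix n n 𝕜} (hP : P.PosDef) :
    ∃ R : Matrix n n 𝕜, IsUnit R ∧ P = Rᴴ * R := by
  have hP₀ : 0 ≤ P := hP.posSemidef.nonneg
  refine ⟨CFC.sqrt P, (CFC.isUnit_sqrt_iff P hP₀).mpr hP.isUnit, ?_⟩
  rw [(nonneg_iff_posSemidef.mp (CFC.sqrt_nonneg P)).isHermitian.eq, CFC.sqrt_mul_sqrt_self P hP₀]

theorem PosDef.trace_conjTranspose_mul_mul_mul_pos {P Q X : Matrix n n 𝕜} (hP : P.PosDef)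
    (hQ : Q.PosDef) (hX : X ≠ 0) : 0 < (Xᴴ * P * X * Q).trace := by
  obtain ⟨R, hR, rfl⟩ := hP.exists_isUnit_eq_conjTranspose_mul_self
  obtain ⟨S, hS, rfl⟩ := hQ.exists_isUnit_eq_conjTranspose_mul_self
  have hRXS : R * X * Sᴴ ≠ 0 := by
    rwa [Ne, ((isUnit_conjTranspose S).2 hS).mul_left_eq_zero, hR.mul_right_eq_zero]
  have hcycle : (Xᴴ * (Rᴴ * R) * X * (Sᴴ * S)).trace =
      ((R * X * Sᴴ)ᴴ * (R * X * Sᴴ)).trace := by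
    rw [← Matrix.mul_assoc, trace_mul_comm, conjTranspose_mul, conjTranspose_mul,
      conjTranspose_conjTranspose]
    simp only [Matrix.mul_assoc]
  exact hcycle ▸ trace_conjTranspose_mul_self_pos hRXS

theorem PosDef.injective_derivPow {A : Matrix n n 𝕜} (hA : A.PosDef) {k : ℕ} (hk : 0 < k) :
    Function.Injective (derivPow 𝕜 A k) := by
  rw [← LinearMap.ker_eq_bot, LinearMap.ker_eq_bot']
  intro X hX
  by_contra hX₀
  have hpos : 0 < (Xᴴ * derivPow 𝕜 A k X).trace := by
    rw [derivPow_apply, Finset.mul_sum, trace_sum]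
    refine Finset.sum_pos (fun j _ ↦ ?_) ⟨1, Finset.mem_Icc.mpr ⟨le_rfl, hk⟩⟩
    rw [← Matrix.mul_assoc, ← Matrix.mul_assoc]
    exact (hA.pow _).trace_conjTranspose_mul_mul_mul_pos (hA.pow _) hX₀
  rw [hX, Matrix.mul_zero, trace_zero] at hpos
  exact hpos.false

end Matrix

/-- For a Hermitian positive definite `l × l` matrix `A` and any matrix `Y`, the matrix
equation `∑_{j=1}^{n} A^{n-j} X A^{j-1} = Y` has a unique solution `X`. -/
theorem stmt_9 (l : ℕ) (A : Matrix (Fin l) (Fin l) ℂ) (hA : A.PosDef)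
    (n : ℕ) (hn : 0 < n) (Y : Matrix (Fin l) (Fin l) ℂ) :
    ∃! X : Matrix (Fin l) (Fin l) ℂ,
      ∑ j ∈ Finset.Icc 1 n, A ^ (n - j) * X * A ^ (j - 1) = Y := by
  have hinj := hA.injective_derivPow hn
  have hbij : Function.Bijective (derivPow ℂ A n) :=
    ⟨hinj, LinearMap.injective_iff_surjective.mp hinj⟩
  simpa only [derivPow_apply] using hbij.existsUnique Y
end

section
/- Let A = diag(1, 2) and let B be the 2×2 matrix all of whose entries equal 1. Define the 2×2 matrix X = [[2, (3 + 6·2^{1/2})/(1 + 2·2^{3/4})], [(3 + 6·2^{1/2})/(1 + 2·2^{3/4}), 2·2^{3/4}]]. Then X satisfies the matrix equation A^{7/4} X + X A^{7/4} = A^{5/2} B + A^{3/2} B A + A B A^{3/2} + B A^{5/2}, but X is not positive semidefinite (X has a negative eigenvalue). In particular, there is no positive semidefinite 2×2 matrix solving this equation. -/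
open scoped ComplexOrder

/-- Real powers of `A = diag(1, 2)` (entrywise real powers, as a complex matrix). -/
noncomputable def Apow12 (u : ℝ) : Matrix (Fin 2) (Fin 2) ℂ :=
  Matrix.diagonal ![1, ((((2 : ℝ) ^ u) : ℝ) : ℂ)]

/-- The `2 × 2` all-ones matrix. -/
def B12 : Matrix (Fin 2) (Fin 2) ℂ := Matrix.of fun _ _ => 1

/-- The off-diagonal entry `(3 + 6·2^{1/2}) / (1 + 2·2^{3/4})`. -/
noncomputable def c12 : ℝ :=
  (3 + 6 * (2 : ℝ) ^ ((1 : ℝ) / 2)) / (1 + 2 * (2 : ℝ) ^ ((3 : ℝ) / 4))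

/-- The matrix `X = [[2, c], [c, 2·2^{3/4}]]`. -/
noncomputable def X12 : Matrix (Fin 2) (Fin 2) ℂ :=
  !![(2 : ℂ), (c12 : ℂ); (c12 : ℂ), (((2 * (2 : ℝ) ^ ((3 : ℝ) / 4)) : ℝ) : ℂ)]

/-! The operator `X ↦ A^{7/4} X + X A^{7/4}` multiplies the `(i, j)` entry of `X` by
`λᵢ + λⱼ ≠ 0`, where `λ = (1, 2^{7/4})`, so `X12` is the only solution. Writing `θ = 2^{1/4}`,
all powers of `2` involved are powers of `θ`, and `det X12 = 4θ³ - c²`; clearing the denominator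
of `c` and reducing modulo `θ⁴ = 2` turns `det X12 < 0` into the positivity of the cubic
`81 - 64θ + 4θ² - 4θ³` on `1 < θ < 6/5`. A positive semidefinite matrix has nonnegative
determinant. -/

namespace Matrix

variable {n R : Type*} [Fintype n] [DecidableEq n]

theorem diagonal_mul_add_mul_diagonal_apply [CommSemiring R] (d : n → R)
    (X : Matrix n n R) (i j : n) :
    (diagonal d * X + X * diagonal d) i j = (d i + d j) * X i j := by
  rw [add_apply, diagonal_mul, mul_diagonal]
  ring

theorem eq_of_diagonal_mul_add_mul_diagonal_eq [CommRing R] [NoZeroDivisors R] {d : n → R}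
    (hd : ∀ i j, d i + d j ≠ 0) {X Y : Matrix n n R}
    (h : diagonal d * X + X * diagonal d = diagonal d * Y + Y * diagonal d) : X = Y := by
  ext i j
  have hij := congrFun₂ h i j
  rw [diagonal_mul_add_mul_diagonal_apply, diagonal_mul_add_mul_diagonal_apply] at hij
  exact mul_left_cancel₀ (hd i j) hij

end Matrix

noncomputable def fourthRootTwo : ℝ := 2 ^ ((1 : ℝ) / 4)

local notation "θ" => fourthRootTwo

theorem two_rpow_natCast_div_four (k : ℕ) : (2 : ℝ) ^ ((k : ℝ) / 4) = θ ^ k := by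
  rw [fourthRootTwo, ← Real.rpow_mul_natCast zero_le_two]
  ring_nf

theorem fourthRootTwo_pow_four : θ ^ 4 = 2 := by
  rw [← two_rpow_natCast_div_four]
  norm_num

theorem one_lt_fourthRootTwo : 1 < θ :=
  Real.one_lt_rpow one_lt_two (by norm_num)

theorem fourthRootTwo_lt : θ < 6 / 5 :=
  lt_of_pow_lt_pow_left₀ 4 (by norm_num) (by rw [fourthRootTwo_pow_four]; norm_num)

theorem two_rpow_three_quarters : (2 : ℝ) ^ ((3 : ℝ) / 4) = θ ^ 3 := by
  rw [← two_rpow_natCast_div_four]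
  norm_num

theorem c12_mul : c12 * (1 + 2 * θ ^ 3) = 3 + 6 * θ ^ 2 := by
  have h12 : (2 : ℝ) ^ ((1 : ℝ) / 2) = θ ^ 2 := by rw [← two_rpow_natCast_div_four]; norm_num
  have hθ := one_lt_fourthRootTwo
  rw [c12, h12, two_rpow_three_quarters, div_mul_cancel₀]
  positivity

theorem four_mul_fourthRootTwo_pow_three_lt_c12_sq : 4 * θ ^ 3 < c12 ^ 2 := by
  have hθ := one_lt_fourthRootTwo
  have hθ' := fourthRootTwo_lt
  have hD : 0 < (1 + 2 * θ ^ 3) ^ 2 := by positivity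
  have hcubic : 0 < 81 - 64 * θ + 4 * θ ^ 2 - 4 * θ ^ 3 := by
    nlinarith [mul_pos (sub_pos.2 hθ) (sub_pos.2 hθ'), mul_pos (sub_pos.2 hθ) (sub_pos.2 hθ)]
  refine lt_of_mul_lt_mul_right ?_ hD.le
  calc 4 * θ ^ 3 * (1 + 2 * θ ^ 3) ^ 2 < (3 + 6 * θ ^ 2) ^ 2 := by
        linear_combination hcubic - (36 - 32 * θ - 16 * θ ^ 2 - 16 * θ ^ 5) * fourthRootTwo_pow_four
    _ = c12 ^ 2 * (1 + 2 * θ ^ 3) ^ 2 := by rw [← c12_mul]; ring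

theorem X12_solves :
    Apow12 (7 / 4) * X12 + X12 * Apow12 (7 / 4) =
      Apow12 (5 / 2) * B12 + Apow12 (3 / 2) * B12 * Apow12 1 +
        Apow12 1 * B12 * Apow12 (3 / 2) + B12 * Apow12 (5 / 2) := by
  have h32 : (2 : ℝ) ^ ((3 : ℝ) / 2) = θ ^ 6 := by rw [← two_rpow_natCast_div_four]; norm_num
  have h52 : (2 : ℝ) ^ ((5 : ℝ) / 2) = θ ^ 10 := by rw [← two_rpow_natCast_div_four]; norm_num
  have h74 : (2 : ℝ) ^ ((7 : ℝ) / 4) = θ ^ 7 := by rw [← two_rpow_natCast_div_four]; norm_num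
  have hc := congrArg Complex.ofReal c12_mul
  have h4 := congrArg Complex.ofReal fourthRootTwo_pow_four
  push_cast at hc h4
  ext i j
  rw [Apow12, Matrix.diagonal_mul_add_mul_diagonal_apply]
  fin_cases i <;> fin_cases j <;>
    simp only [X12, Apow12, B12, Matrix.add_apply, Matrix.mul_apply, Fin.sum_univ_two,
      Matrix.diagonal_apply_eq, Matrix.diagonal_apply_ne, Matrix.of_apply, Matrix.cons_val',
      Matrix.cons_val_zero, Matrix.cons_val_one, Matrix.cons_val_fin_one, Fin.zero_eta, Fin.mk_one,
      Fin.isValue, ne_eq, zero_ne_one, one_ne_zero, not_false_eq_true, Complex.ofReal_mul,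
      Complex.ofReal_pow, Complex.ofReal_ofNat, Real.rpow_one, two_rpow_three_quarters, h32, h52, h74]
  · norm_num
  · linear_combination hc + (θ ^ 3 * c12 - θ ^ 2 - θ ^ 2 * (θ ^ 4 + 2) : ℂ) * h4
  · linear_combination hc + (θ ^ 3 * c12 - θ ^ 2 - θ ^ 2 * (θ ^ 4 + 2) : ℂ) * h4
  · linear_combination (2 * θ ^ 6 : ℂ) * h4

theorem eq_X12_of_solves {X : Matrix (Fin 2) (Fin 2) ℂ}
    (h : Apow12 (7 / 4) * X + X * Apow12 (7 / 4) =
      Apow12 (5 / 2) * B12 + Apow12 (3 / 2) * B12 * Apow12 1 +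
        Apow12 1 * B12 * Apow12 (3 / 2) + B12 * Apow12 (5 / 2)) : X = X12 := by
  refine Matrix.eq_of_diagonal_mul_add_mul_diagonal_eq (fun i j => ?_) (h.trans X12_solves.symm)
  have hpos : ∀ i, 0 < ![(1 : ℂ), ((2 : ℝ) ^ ((7 : ℝ) / 4) : ℝ)] i :=
    Fin.forall_fin_two.2 ⟨one_pos, Complex.zero_lt_real.2 (by positivity)⟩
  exact (add_pos (hpos i) (hpos j)).ne'

theorem det_X12 : X12.det = ((4 * θ ^ 3 - c12 ^ 2 : ℝ) : ℂ) := by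
  rw [X12, Matrix.det_fin_two_of, two_rpow_three_quarters]
  push_cast
  ring

theorem not_posSemidef_X12 : ¬ X12.PosSemidef := fun hX => by
  have h := hX.det_nonneg
  rw [det_X12, Complex.zero_le_real] at h
  linarith [four_mul_fourthRootTwo_pow_three_lt_c12_sq]

/-- Remark 2.2: `X12` solves
`A^{7/4} X + X A^{7/4} = A^{5/2} B + A^{3/2} B A + A B A^{3/2} + B A^{5/2}`
but is not positive semidefinite; in particular, no positive semidefinite matrix solves
this equation. -/
theorem stmt_12 :
    (Apow12 (7 / 4) * X12 + X12 * Apow12 (7 / 4) =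
      Apow12 (5 / 2) * B12 + Apow12 (3 / 2) * B12 * Apow12 1 +
        Apow12 1 * B12 * Apow12 (3 / 2) + B12 * Apow12 (5 / 2)) ∧
    ¬ X12.PosSemidef ∧
    ¬ ∃ X : Matrix (Fin 2) (Fin 2) ℂ, X.PosSemidef ∧
        Apow12 (7 / 4) * X + X * Apow12 (7 / 4) =
          Apow12 (5 / 2) * B12 + Apow12 (3 / 2) * B12 * Apow12 1 +
            Apow12 1 * B12 * Apow12 (3 / 2) + B12 * Apow12 (5 / 2) := by
  refine ⟨X12_solves, not_posSemidef_X12, ?_⟩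
  rintro ⟨X, hX, hsolves⟩
  exact not_posSemidef_X12 (eq_X12_of_solves hsolves ▸ hX)
end
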